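/- Let {·_λ·} be a λ-bracket on A which is skewsymmetric and satisfies the PVA-Jacobi identity for all triples of elements of A. Then the induced bracket {∫f, ∫g} := ∫{f, g} makes the space of local functionals F into a Lie algebra over ℂ: it is well defined, skewsymmetric (∫{g,f} = −∫{f,g}), and satisfies the Jacobi identity. -/

import Mathlib

/-! Sesquilinearity gives `{S_α f, g} = {f, g}` and `{f, S_α g} = S_α {f, g}`, so the bracket
descends to local functionals. Skewsymmetry turns `{g, f}` into `-Σ_T S^{-T} B_T(f, g)`, which is
`-{f, g}` up to total shifts. Summing the PVA-Jacobi identity over all `T` and `U` (only finitely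
many terms are nonzero) gives the Jacobi identity for `{·, ·}` already on `A`. -/

open MvPolynomial

namespace MPVA

/-- The algebra of difference polynomials in `ℓ` generators on a `D`-dimensional lattice:
polynomials over `ℂ` in the variables `u^i_N`, `i ∈ Fin ℓ`, `N ∈ ℤ^D`. -/
abbrev A (ℓ D : ℕ) := MvPolynomial (Fin ℓ × (Fin D → ℤ)) ℂ

variable {ℓ D : ℕ}

/-- The shift automorphism `S^M` sending `u^i_N` to `u^i_{N+M}`. -/
noncomputable def Sh (M : Fin D → ℤ) : A ℓ D ≃ₐ[ℂ] A ℓ D :=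
  renameEquiv ℂ ((Equiv.refl (Fin ℓ)).prodCongr (Equiv.addRight M))

/-- The `α`-th standard basis vector `E_α ∈ ℤ^D`. -/
def E (α : Fin D) : Fin D → ℤ := fun β => if β = α then 1 else 0

/-- Membership in `(S₁−1)A + ⋯ + (S_D−1)A` (so `∫x = 0` in the space of local
functionals `F = A/((S₁−1)A + ⋯ + (S_D−1)A)`). -/
def InShiftIdeal (x : A ℓ D) : Prop :=
  ∃ h : Fin D → A ℓ D, x = ∑ α : Fin D, (Sh (E α) (h α) - h α)

/-- A λ-bracket on `A`, presented through its coefficients: `{f_λ g} = Σ_T (B T f g)·λ^T`. -/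
structure IsLambdaBracket (B : (Fin D → ℤ) → A ℓ D → A ℓ D → A ℓ D) : Prop where
  add_left : ∀ (T : Fin D → ℤ) (f₁ f₂ g : A ℓ D), B T (f₁ + f₂) g = B T f₁ g + B T f₂ g
  smul_left : ∀ (T : Fin D → ℤ) (c : ℂ) (f g : A ℓ D), B T (c • f) g = c • B T f g
  add_right : ∀ (T : Fin D → ℤ) (f g₁ g₂ : A ℓ D), B T f (g₁ + g₂) = B T f g₁ + B T f g₂
  smul_right : ∀ (T : Fin D → ℤ) (c : ℂ) (f g : A ℓ D), B T f (c • g) = c • B T f g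
  finite : ∀ f g : A ℓ D, (Function.support fun T => B T f g).Finite
  sesqui_left : ∀ (T : Fin D → ℤ) (α : Fin D) (f g : A ℓ D),
    B T (Sh (E α) f) g = B (T + E α) f g
  sesqui_right : ∀ (T : Fin D → ℤ) (α : Fin D) (f g : A ℓ D),
    B T f (Sh (E α) g) = Sh (E α) (B (T - E α) f g)
  leibniz_left : ∀ (T : Fin D → ℤ) (f g h : A ℓ D),
    B T f (g * h) = B T f g * h + B T f h * g
  leibniz_right : ∀ (T : Fin D → ℤ) (f g h : A ℓ D),
    B T (f * g) h = B T f h * Sh T g + B T g h * Sh T f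

/-- Skewsymmetry of the λ-bracket: `B_{−T}(g,f) = −S^{−T}(B_T(f,g))`. -/
def IsSkew (B : (Fin D → ℤ) → A ℓ D → A ℓ D → A ℓ D) : Prop :=
  ∀ (f g : A ℓ D) (T : Fin D → ℤ), B (-T) g f = - Sh (-T) (B T f g)

/-- The PVA-Jacobi identity, coefficient-wise in `λ^T μ^U`. -/
def IsJacobi (B : (Fin D → ℤ) → A ℓ D → A ℓ D → A ℓ D) : Prop :=
  ∀ (f g h : A ℓ D) (T U : Fin D → ℤ),
    B T f (B U g h) - B U g (B T f h) = B U (B (T - U) f g) h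

/-- The bracket `{f,g} := {f_λ g}|_{λ=1} = Σ_T B_T(f,g)`. -/
noncomputable def br (B : (Fin D → ℤ) → A ℓ D → A ℓ D → A ℓ D) (f g : A ℓ D) : A ℓ D :=
  ∑ᶠ T : Fin D → ℤ, B T f g

theorem finsum_comm_of_support_subset {α β M : Type*} [AddCommMonoid M] {f : α → β → M}
    (s : Finset β) (hs : ∀ a, Function.support (f a) ⊆ s)
    (hf : ∀ b, Function.HasFiniteSupport fun a => f a b) :
    ∑ᶠ a, ∑ᶠ b, f a b = ∑ᶠ b, ∑ᶠ a, f a b := by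
  rw [finsum_congr fun a => finsum_eq_sum_of_support_subset _ (hs a),
    finsum_sum_comm s f fun b _ => hf b]
  refine (finsum_eq_sum_of_support_subset _ fun b hb => ?_).symm
  by_contra hbs
  exact hb (finsum_eq_zero_of_forall_eq_zero fun a =>
    Function.notMem_support.1 fun hab => hbs (hs a hab))

lemma Sh_apply (M : Fin D → ℤ) (x : A ℓ D) :
    Sh M x = rename (fun p : Fin ℓ × (Fin D → ℤ) => (p.1, p.2 + M)) x := rfl

lemma Sh_Sh (M N : Fin D → ℤ) (x : A ℓ D) : Sh M (Sh N x) = Sh (N + M) x := by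
  simp only [Sh_apply, rename_rename, Function.comp_def, add_assoc]

lemma Sh_zero (x : A ℓ D) : Sh (0 : Fin D → ℤ) x = x := by
  simp only [Sh_apply, add_zero]
  exact rename_id_apply x

variable (ℓ D) in
def shiftIdeal : AddSubgroup (A ℓ D) where
  carrier := {x | InShiftIdeal x}
  zero_mem' := ⟨0, by simp⟩
  add_mem' := by
    rintro _ _ ⟨h, rfl⟩ ⟨h', rfl⟩
    refine ⟨h + h', ?_⟩
    simp only [Pi.add_apply, map_add, ← Finset.sum_add_distrib]
    exact Finset.sum_congr rfl fun _ _ => by abel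
  neg_mem' := by
    rintro _ ⟨h, rfl⟩
    refine ⟨-h, ?_⟩
    simp only [Pi.neg_apply, map_neg, ← Finset.sum_neg_distrib]
    exact Finset.sum_congr rfl fun _ _ => by abel

lemma Sh_E_sub_self_mem_shiftIdeal (α : Fin D) (x : A ℓ D) :
    Sh (E α) x - x ∈ shiftIdeal ℓ D := by
  classical
  refine ⟨Pi.single α x, ?_⟩
  rw [Finset.sum_eq_single α (fun β _ hβ => by simp [hβ]) (by simp)]
  simp

/-- The `M` with `(S^M − 1)A ⊆ shiftIdeal` form a subgroup of `ℤ^D`, since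
`S^{M+N} − 1 = (S^M − 1) S^N + (S^N − 1)`, and it contains every `E α`. -/
lemma Sh_sub_self_mem_shiftIdeal (M : Fin D → ℤ) (x : A ℓ D) :
    Sh M x - x ∈ shiftIdeal ℓ D := by
  let periods : AddSubgroup (Fin D → ℤ) :=
    { carrier := {N | ∀ y : A ℓ D, Sh N y - y ∈ shiftIdeal ℓ D}
      zero_mem' := fun y => by simp [Sh_zero]
      add_mem' := fun {N P} hN hP y => by
        have h : Sh (N + P) y - y = (Sh N (Sh P y) - Sh P y) + (Sh P y - y) := by
          rw [Sh_Sh, add_comm P N]; abel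
        exact h ▸ add_mem (hN _) (hP _)
      neg_mem' := fun {N} hN y => by
        have h : Sh (-N) y - y = -(Sh N (Sh (-N) y) - Sh (-N) y) := by
          rw [Sh_Sh, neg_add_cancel, Sh_zero]; abel
        exact h ▸ neg_mem (hN _) }
  have hM : M = ∑ α : Fin D, M α • E α := by
    funext β
    simp [E, Finset.sum_apply, mul_ite]
  have : M ∈ periods := hM ▸ sum_mem fun α _ =>
    zsmul_mem (show E α ∈ periods from Sh_E_sub_self_mem_shiftIdeal α) (M α)
  exact this x

section Bracket

variable {B : (Fin D → ℤ) → A ℓ D → A ℓ D → A ℓ D}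

namespace IsLambdaBracket

noncomputable def coeffRight (hB : IsLambdaBracket B) (T : Fin D → ℤ) (f : A ℓ D) :
    A ℓ D →+ A ℓ D :=
  AddMonoidHom.mk' (B T f) (hB.add_right T f)

noncomputable def coeffLeft (hB : IsLambdaBracket B) (T : Fin D → ℤ) (g : A ℓ D) :
    A ℓ D →+ A ℓ D :=
  AddMonoidHom.mk' (B T · g) (fun f f' => hB.add_left T f f' g)

lemma B_finsum_right (hB : IsLambdaBracket B) {ι : Type*} (T : Fin D → ℤ) (f : A ℓ D)
    {φ : ι → A ℓ D} (hφ : Function.HasFiniteSupport φ) :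
    B T f (∑ᶠ i, φ i) = ∑ᶠ i, B T f (φ i) :=
  map_finsum (hB.coeffRight T f) hφ

lemma B_finsum_left (hB : IsLambdaBracket B) {ι : Type*} (T : Fin D → ℤ) (g : A ℓ D)
    {φ : ι → A ℓ D} (hφ : Function.HasFiniteSupport φ) :
    B T (∑ᶠ i, φ i) g = ∑ᶠ i, B T (φ i) g :=
  map_finsum (hB.coeffLeft T g) hφ

lemma br_add_left (hB : IsLambdaBracket B) (f f' g : A ℓ D) :
    br B (f + f') g = br B f g + br B f' g := by
  rw [br, br, br, ← finsum_add_distrib (hB.finite f g) (hB.finite f' g)]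
  exact finsum_congr fun T => hB.add_left T f f' g

lemma br_add_right (hB : IsLambdaBracket B) (f g g' : A ℓ D) :
    br B f (g + g') = br B f g + br B f g' := by
  rw [br, br, br, ← finsum_add_distrib (hB.finite f g) (hB.finite f g')]
  exact finsum_congr fun T => hB.add_right T f g g'

noncomputable def brLeft (hB : IsLambdaBracket B) (g : A ℓ D) : A ℓ D →+ A ℓ D :=
  AddMonoidHom.mk' (br B · g) (fun f f' => hB.br_add_left f f' g)

noncomputable def brRight (hB : IsLambdaBracket B) (f : A ℓ D) : A ℓ D →+ A ℓ D :=
  AddMonoidHom.mk' (br B f) (hB.br_add_right f)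

lemma br_sub_left (hB : IsLambdaBracket B) (f f' g : A ℓ D) :
    br B (f - f') g = br B f g - br B f' g :=
  map_sub (hB.brLeft g) f f'

lemma br_sub_right (hB : IsLambdaBracket B) (f g g' : A ℓ D) :
    br B f (g - g') = br B f g - br B f g' :=
  map_sub (hB.brRight f) g g'

lemma br_Sh_E_left (hB : IsLambdaBracket B) (α : Fin D) (f g : A ℓ D) :
    br B (Sh (E α) f) g = br B f g := by
  rw [br, finsum_congr fun T => hB.sesqui_left T α f g]
  exact finsum_comp_equiv (Equiv.addRight (E α)) (f := fun T => B T f g)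

lemma br_Sh_E_right (hB : IsLambdaBracket B) (α : Fin D) (f g : A ℓ D) :
    br B f (Sh (E α) g) = Sh (E α) (br B f g) := by
  rw [br, finsum_congr fun T => hB.sesqui_right T α f g, br,
    ← finsum_comp_equiv (Equiv.subRight (E α)) (f := fun T => B T f g),
    map_finsum _ ((hB.finite f g).preimage (Equiv.subRight (E α)).injective.injOn)]
  rfl

lemma br_eq_zero_of_mem_shiftIdeal (hB : IsLambdaBracket B) {p : A ℓ D}
    (hp : p ∈ shiftIdeal ℓ D) (g : A ℓ D) :
    br B p g = 0 := by
  obtain ⟨h, rfl⟩ := hp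
  change hB.brLeft g _ = 0
  simp only [map_sum, map_sub]
  exact Finset.sum_eq_zero fun α _ => sub_eq_zero.2 (hB.br_Sh_E_left α _ g)

lemma br_mem_shiftIdeal (hB : IsLambdaBracket B) {q : A ℓ D} (f : A ℓ D)
    (hq : q ∈ shiftIdeal ℓ D) :
    br B f q ∈ shiftIdeal ℓ D := by
  obtain ⟨h, rfl⟩ := hq
  refine ⟨fun α => br B f (h α), ?_⟩
  change hB.brRight f _ = _
  simp only [map_sum, map_sub]
  exact Finset.sum_congr rfl fun α _ => congrArg (· - _) (hB.br_Sh_E_right α f (h α))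

lemma br_sub_br_mem_shiftIdeal (hB : IsLambdaBracket B) {f f' g g' : A ℓ D}
    (hf : f - f' ∈ shiftIdeal ℓ D) (hg : g - g' ∈ shiftIdeal ℓ D) :
    br B f g - br B f' g' ∈ shiftIdeal ℓ D := by
  have h : br B f g - br B f' g' = br B (f - f') g + br B f' (g - g') := by
    rw [hB.br_sub_left, hB.br_sub_right]
    abel
  rw [h, hB.br_eq_zero_of_mem_shiftIdeal hf, zero_add]
  exact hB.br_mem_shiftIdeal f' hg

lemma br_swap_add_br_mem_shiftIdeal (hB : IsLambdaBracket B) (hskew : IsSkew B)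
    (f g : A ℓ D) : br B g f + br B f g ∈ shiftIdeal ℓ D := by
  have hfin : Function.HasFiniteSupport fun T => Sh (-T) (B T f g) :=
    (hB.finite f g).subset fun T hT h0 => hT (by simp only at h0 ⊢; rw [h0, map_zero])
  have hgf : br B g f = -∑ᶠ T, Sh (-T) (B T f g) := by
    rw [br, ← finsum_comp_equiv (Equiv.neg _), ← finsum_neg_distrib]
    exact finsum_congr fun T => hskew f g T
  rw [hgf, neg_add_eq_sub, br, ← finsum_sub_distrib (hB.finite f g) hfin]
  refine finsum_induction (· ∈ shiftIdeal ℓ D) (zero_mem _) (fun _ _ => add_mem) fun T => ?_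
  rw [← neg_sub]
  exact neg_mem (Sh_sub_self_mem_shiftIdeal (-T) _)

lemma br_br_eq_add (hB : IsLambdaBracket B) (hjac : IsJacobi B) (f g h : A ℓ D) :
    br B f (br B g h) = br B g (br B f h) + br B (br B f g) h := by
  have inner : ∀ U, ∑ᶠ T, B T f (B U g h) = B U g (br B f h) + B U (br B f g) h := by
    intro U
    have hfin : Function.HasFiniteSupport fun T => B U g (B T f h) :=
      Function.HasFiniteSupport.fun_comp (hB.finite f h) (map_zero (hB.coeffRight U g))
    rw [← sub_eq_iff_eq_add', br, br, hB.B_finsum_right U g (hB.finite f h),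
      hB.B_finsum_left U h (hB.finite f g), ← finsum_sub_distrib (hB.finite _ _) hfin]
    exact (finsum_congr fun T => hjac f g h T U).trans
      (finsum_comp_equiv (Equiv.subRight U) (f := fun S => B U (B S f g) h))
  have hgh := hB.finite g h
  calc br B f (br B g h) = ∑ᶠ T, ∑ᶠ U, B T f (B U g h) :=
        finsum_congr fun T => hB.B_finsum_right T f hgh
    _ = ∑ᶠ U, ∑ᶠ T, B T f (B U g h) :=
        finsum_comm_of_support_subset hgh.toFinset
          (fun T => (Function.support_comp_subset (map_zero (hB.coeffRight T f)) _).trans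
            hgh.coe_toFinset.symm.subset)
          fun U => hB.finite f _
    _ = ∑ᶠ U, (B U g (br B f h) + B U (br B f g) h) := finsum_congr inner
    _ = br B g (br B f h) + br B (br B f g) h :=
        finsum_add_distrib (hB.finite _ _) (hB.finite _ _)

end IsLambdaBracket

end Bracket

/-- for a skewsymmetric λ-bracket satisfying the PVA-Jacobi identity,
the induced bracket `{∫f,∫g} := ∫{f,g}` makes the space of local functionals `F` into a
Lie algebra over ℂ: it is well defined, skewsymmetric (`∫{g,f} = −∫{f,g}`), and satisfies
the Jacobi identity. -/
theorem functionals_lie_algebra (ℓ D : ℕ)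
    (B : (Fin D → ℤ) → A ℓ D → A ℓ D → A ℓ D) (hB : IsLambdaBracket B)
    (hskew : IsSkew B) (hjac : IsJacobi B) :
    (∀ f f' g g' : A ℓ D, InShiftIdeal (f - f') → InShiftIdeal (g - g') →
      InShiftIdeal (br B f g - br B f' g')) ∧
    (∀ f g : A ℓ D, InShiftIdeal (br B g f + br B f g)) ∧
    (∀ f g h : A ℓ D,
      InShiftIdeal (br B f (br B g h) - br B g (br B f h) - br B (br B f g) h)) := by
  refine ⟨fun f f' g g' hf hg => hB.br_sub_br_mem_shiftIdeal hf hg,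
    hB.br_swap_add_br_mem_shiftIdeal hskew, fun f g h => ?_⟩
  rw [hB.br_br_eq_add hjac f g h, add_sub_cancel_left, sub_self]
  exact zero_mem (shiftIdeal ℓ D)

end MPVA
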